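/- arXiv:1007.0181 — 4 statements merged into one kernel-verified Lean document; each statement's English description precedes it below -/
import Mathlib

section
/- Let U be the subgroup of GL_2(F_5) of matrices [[1,*],[0,1]] and B the subgroup of matrices [[*,*],[0,1]]. Let ad⁰ be the 3-dimensional space of trace-zero 2×2 matrices over F_5 with B acting by conjugation twisted by the i-th power of the determinant. Then the subspace of H^1(U, ad⁰(i)) fixed by B/U is zero for i = 0, 1, and 3. -/
noncomputable section

open Matrix

/-- `σ = [[1,1],[0,1]] ∈ GL₂(𝔽₅)`. -/
def sigma5 : GL (Fin 2) (ZMod 5) :=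
  ⟨!![1, 1; 0, 1], !![1, -1; 0, 1], by decide, by decide⟩

/-- `τ = [[3,0],[0,1]] ∈ GL₂(𝔽₅)`. -/
def tau5 : GL (Fin 2) (ZMod 5) :=
  ⟨!![3, 0; 0, 1], !![2, 0; 0, 1], by decide, by decide⟩

/-- `U` is the subgroup generated by `σ` (the unipotent upper triangular matrices). -/
def U5 : Subgroup (GL (Fin 2) (ZMod 5)) := Subgroup.closure {sigma5}

/-- `B` is the subgroup generated by `σ` and `τ` (the Borel `[[*,*],[0,1]]`). -/
def B5 : Subgroup (GL (Fin 2) (ZMod 5)) := Subgroup.closure {sigma5, tau5}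

/-- The action of `g ∈ GL₂(𝔽₅)` on `ad⁰(i)`: `A ↦ det(g)ⁱ · g A g⁻¹`. -/
def actAd0 (i : ℕ) (g : GL (Fin 2) (ZMod 5)) (A : Matrix (Fin 2) (Fin 2) (ZMod 5)) :
    Matrix (Fin 2) (Fin 2) (ZMod 5) :=
  ((g : Matrix (Fin 2) (Fin 2) (ZMod 5)).det) ^ i •
    ((g : Matrix (Fin 2) (Fin 2) (ZMod 5)) * A * ((g⁻¹ : GL (Fin 2) (ZMod 5)) :
      Matrix (Fin 2) (Fin 2) (ZMod 5)))


lemma actAd0_one (i : ℕ) (A : Matrix (Fin 2) (Fin 2) (ZMod 5)) : actAd0 i 1 A = A := by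
  simp [actAd0]

lemma actAd0_mul (i : ℕ) (g h : GL (Fin 2) (ZMod 5)) (A : Matrix (Fin 2) (Fin 2) (ZMod 5)) :
    actAd0 i (g * h) A = actAd0 i g (actAd0 i h A) := by
  simp only [actAd0, Units.val_mul, Matrix.det_mul, mul_pow, _root_.mul_inv_rev,
    Matrix.mul_smul, Matrix.smul_mul, smul_smul, mul_assoc]

lemma actAd0_sub (i : ℕ) (g : GL (Fin 2) (ZMod 5)) (A B : Matrix (Fin 2) (Fin 2) (ZMod 5)) :
    actAd0 i g (A - B) = actAd0 i g A - actAd0 i g B := by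
  simp [actAd0, Matrix.mul_sub, Matrix.sub_mul, smul_sub]

lemma actAd0_sigma (i : ℕ) (A : Matrix (Fin 2) (Fin 2) (ZMod 5)) :
    actAd0 i sigma5 A = !![1,1;0,1] * A * !![1,-1;0,1] := by
  have h1 : ((sigma5 : GL (Fin 2) (ZMod 5)) : Matrix (Fin 2) (Fin 2) (ZMod 5)) = !![1,1;0,1] := rfl
  have h2 : ((sigma5⁻¹ : GL (Fin 2) (ZMod 5)) : Matrix (Fin 2) (Fin 2) (ZMod 5)) = !![1,-1;0,1] :=
    rfl
  have h3 : (!![1,1;0,1] : Matrix (Fin 2) (Fin 2) (ZMod 5)).det = 1 := by decide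
  simp [actAd0, h1, h2, h3]

lemma actAd0_tau (i : ℕ) (A : Matrix (Fin 2) (Fin 2) (ZMod 5)) :
    actAd0 i tau5 A = ((3 : ZMod 5) ^ i) • (!![3,0;0,1] * A * !![2,0;0,1]) := by
  have h1 : ((tau5 : GL (Fin 2) (ZMod 5)) : Matrix (Fin 2) (Fin 2) (ZMod 5)) = !![3,0;0,1] := rfl
  have h2 : ((tau5⁻¹ : GL (Fin 2) (ZMod 5)) : Matrix (Fin 2) (Fin 2) (ZMod 5)) = !![2,0;0,1] :=
    rfl
  have h3 : (!![3,0;0,1] : Matrix (Fin 2) (Fin 2) (ZMod 5)).det = 3 := by decide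
  simp [actAd0, h1, h2, h3]

lemma tau_conj_sigma : tau5⁻¹ * sigma5 * tau5 = sigma5 * sigma5 := by
  ext : 1
  show (!![2,0;0,1] * !![1,1;0,1] * !![3,0;0,1] : Matrix (Fin 2) (Fin 2) (ZMod 5)) =
    !![1,1;0,1] * !![1,1;0,1]
  decide

lemma key (e : ZMod 5) (he : e = 1 ∨ e = 3 ∨ e = 2)
    (c m : Matrix (Fin 2) (Fin 2) (ZMod 5)) (hc : c.trace = 0)
    (h : e • (!![3,0;0,1] * (c + !![1,1;0,1]*c*!![1,-1;0,1]) * !![2,0;0,1]) - c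
        = !![1,1;0,1]*m*!![1,-1;0,1] - m) :
    ∃ m' : Matrix (Fin 2) (Fin 2) (ZMod 5), m'.trace = 0 ∧
      c = !![1,1;0,1] * m' * !![1,-1;0,1] - m' := by
  have h5 : (5 : ZMod 5) = 0 := by decide
  have h10 := congr_fun (congr_fun h 1) 0
  simp [Matrix.mul_apply, Matrix.vecMul, dotProduct, Fin.sum_univ_two] at h10
  simp [Matrix.trace_fin_two] at hc
  have hd : c 1 0 = 0 := by
    rcases he with rfl|rfl|rfl
    · linear_combination 2*h10 - (c 1 0)*h5
    · linear_combination h10 - (2*(c 1 0))*h5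
    · linear_combination 3*h10 - (4*(c 1 0))*h5
  refine ⟨!![2*(c 0 0 + c 0 1), 0; c 0 0, -(2*(c 0 0 + c 0 1))], by simp [Matrix.trace_fin_two],
    ?_⟩
  ext a b
  fin_cases a <;> fin_cases b <;>
    simp [Matrix.mul_apply, Matrix.vecMul, dotProduct, Fin.sum_univ_two]
  all_goals (first
      | exact hd
      | linear_combination hc
      | linear_combination (c 0 0 + c 0 1)*h5)

/-- for `i = 0, 1, 3`, the subspace of `H¹(U, ad⁰(i))` fixed by `B/U`
is zero: any 1-cocycle on `U` valued in trace-zero matrices whose `b`-twist is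
cohomologous to itself for every `b ∈ B` is a coboundary. -/
theorem h1_fixed_by_B_eq_zero (i : ℕ) (hi : i = 0 ∨ i = 1 ∨ i = 3)
    (ξ : GL (Fin 2) (ZMod 5) → Matrix (Fin 2) (Fin 2) (ZMod 5))
    (htr : ∀ u ∈ U5, (ξ u).trace = 0)
    (hcoc : ∀ u ∈ U5, ∀ v ∈ U5, ξ (u * v) = ξ u + actAd0 i u (ξ v))
    (hfix : ∀ b ∈ B5, ∃ m : Matrix (Fin 2) (Fin 2) (ZMod 5), m.trace = 0 ∧
      ∀ u ∈ U5, actAd0 i b (ξ (b⁻¹ * u * b)) - ξ u = actAd0 i u m - m) :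
    ∃ m : Matrix (Fin 2) (Fin 2) (ZMod 5), m.trace = 0 ∧
      ∀ u ∈ U5, ξ u = actAd0 i u m - m := by
  have hσU : sigma5 ∈ U5 := Subgroup.subset_closure (Set.mem_singleton _)
  have hτB : tau5 ∈ B5 := Subgroup.subset_closure (Set.mem_insert_iff.2 (Or.inr rfl))
  have hξ1 : ξ 1 = 0 := by
    have h := hcoc 1 (one_mem _) 1 (one_mem _)
    rw [mul_one, actAd0_one] at h
    exact (left_eq_add.mp h)
  obtain ⟨m, hmtr, hm⟩ := hfix tau5 hτB
  have hE := hm sigma5 hσU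
  rw [tau_conj_sigma, hcoc sigma5 hσU sigma5 hσU, actAd0_tau, actAd0_sigma, actAd0_sigma] at hE
  have he : (3 : ZMod 5) ^ i = 1 ∨ (3 : ZMod 5) ^ i = 3 ∨ (3 : ZMod 5) ^ i = 2 := by
    rcases hi with rfl|rfl|rfl
    · exact Or.inl (by norm_num)
    · exact Or.inr (Or.inl (by norm_num))
    · exact Or.inr (Or.inr (by decide))
  obtain ⟨m', hm'tr, hm'c⟩ := key _ he (ξ sigma5) m (htr _ hσU) hE
  refine ⟨m', hm'tr, ?_⟩
  intro u hu
  induction hu using Subgroup.closure_induction with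
  | mem x hx =>
    rcases Set.mem_singleton_iff.1 hx with rfl
    rw [actAd0_sigma]
    exact hm'c
  | one => rw [hξ1, actAd0_one, sub_self]
  | mul x y hx hy px py =>
    rw [hcoc x hx y hy, px, py, actAd0_sub, ← actAd0_mul]
    abel
  | inv x hx px =>
    have h := hcoc x⁻¹ (inv_mem hx) x hx
    rw [inv_mul_cancel, hξ1, px, actAd0_sub, ← actAd0_mul, inv_mul_cancel, actAd0_one] at h
    rw [eq_neg_of_add_eq_zero_left h.symm, neg_sub]

end
end

section
/- Let p be an odd prime and G a subgroup of GL_2(F_p) containing SL_2(F_p). If a cohomology class ξ in H^1(G, ad⁰(i)) restricts to zero on the cyclic subgroup generated by the transvection [[1,1],[0,1]], and p = 5 or p ≥ 7 with nonexceptional cohomology (so that H^1(SL_2(F_p), ad⁰) = 0 unless p = 5), then ξ = 0. In particular for G ⊇ SL_2(F_5) in GL_2(F_5), the subgroup generated by [[1,1],[0,1]] is a Sylow 5-subgroup of G. -/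
/-!
The transvection has order `p`, while `p` divides `|GL₂(𝔽_p)| = p (p² - 1)(p - 1)` only once, so
the transvection generates a Sylow `p`-subgroup `P` of `G`, and `[G : P]` is invertible in `𝔽_p`.
Restriction to a subgroup of invertible index is injective on `H¹` with `𝔽_p`-coefficients: if a
cocycle `ξ` vanishes on `P`, it is constant on the cosets `gP`, and summing the cocycle identity
over coset representatives gives `[G : P] • ξ g = S - g • S` with `S = ∑_{qP ∈ G/P} ξ q`.
-/

noncomputable section

/-- The transvection `[[1,1],[0,1]]` as an element of `SL₂(ℤ/p)`. -/
def transvSL (p : ℕ) : Matrix.SpecialLinearGroup (Fin 2) (ZMod p) :=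
  ⟨!![1, 1; 0, 1], by simp [Matrix.det_fin_two_of]⟩

/-- The transvection `[[1,1],[0,1]]` as an element of `GL₂(ℤ/p)`. -/
def transvGL (p : ℕ) : GL (Fin 2) (ZMod p) :=
  Matrix.SpecialLinearGroup.toGL (transvSL p)

/-- The action of `g ∈ GL₂(𝔽_p)` on `ad⁰(i)`: `A ↦ det(g)ⁱ · g A g⁻¹`. -/
def actAd0' (p : ℕ) (i : ℕ) (g : GL (Fin 2) (ZMod p)) (A : Matrix (Fin 2) (Fin 2) (ZMod p)) :
    Matrix (Fin 2) (Fin 2) (ZMod p) :=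
  ((g : Matrix (Fin 2) (Fin 2) (ZMod p)).det) ^ i •
    ((g : Matrix (Fin 2) (Fin 2) (ZMod p)) * A *
      ((g⁻¹ : GL (Fin 2) (ZMod p)) : Matrix (Fin 2) (Fin 2) (ZMod p)))

namespace Representation

variable {F Γ M : Type*} [Field F] [Group Γ] [AddCommGroup M] [Module F M]
  {ρ : Representation F Γ M} {ξ : Γ → M} {P : Subgroup Γ}

lemma cocycle_out_smul (hcoc : ∀ g h, ξ (g * h) = ξ g + ρ g (ξ h))
    (hP : ∀ t ∈ P, ξ t = 0) (g : Γ) (q : Γ ⧸ P) :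
    ξ (g • q).out = ξ g + ρ g (ξ q.out) := by
  have hmem : (g * q.out)⁻¹ * (g • q).out ∈ P := by
    rw [← QuotientGroup.eq, QuotientGroup.out_eq', ← smul_eq_mul, ← MulAction.Quotient.smul_mk,
      QuotientGroup.out_eq']
  rw [← mul_inv_cancel_left (g * q.out) (g • q).out, hcoc (g * q.out), hP _ hmem, map_zero,
    add_zero, hcoc]

theorem exists_mem_coboundary_of_eq_zero_on [P.FiniteIndex] (hind : (P.index : F) ≠ 0)
    (N : Submodule F M) (hξN : ∀ g, ξ g ∈ N) (hcoc : ∀ g h, ξ (g * h) = ξ g + ρ g (ξ h))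
    (hP : ∀ t ∈ P, ξ t = 0) : ∃ m ∈ N, ∀ g, ξ g = ρ g m - m := by
  have := Fintype.ofFinite (Γ ⧸ P)
  set S := ∑ q : Γ ⧸ P, ξ q.out
  have hS : ∀ g, (P.index : F) • ξ g = S - ρ g S := by
    intro g
    have : S = P.index • ξ g + ρ g S := calc
      S = ∑ q : Γ ⧸ P, ξ (g • q).out :=
        (Fintype.sum_bijective _ (MulAction.bijective g) _ _ fun _ => rfl).symm
      _ = P.index • ξ g + ρ g S := by
        simp only [cocycle_out_smul hcoc hP, Finset.sum_add_distrib, Finset.sum_const,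
          Finset.card_univ, ← Nat.card_eq_fintype_card, ← Subgroup.index_eq_card, map_sum, S]
    rw [Nat.cast_smul_eq_nsmul]
    exact eq_sub_of_add_eq this.symm
  refine ⟨-(P.index : F)⁻¹ • S, N.smul_mem _ (N.sum_mem fun q _ => hξN _), fun g => ?_⟩
  rw [← inv_smul_smul₀ hind (ξ g), hS, map_smul]
  module

theorem exists_mem_coboundary_of_coboundary_on [P.FiniteIndex] (hind : (P.index : F) ≠ 0)
    (N : Submodule F M) (hN : ∀ g, ∀ x ∈ N, ρ g x ∈ N) (hξN : ∀ g, ξ g ∈ N)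
    (hcoc : ∀ g h, ξ (g * h) = ξ g + ρ g (ξ h)) {m₀ : M} (hm₀ : m₀ ∈ N)
    (hP : ∀ t ∈ P, ξ t = ρ t m₀ - m₀) : ∃ m ∈ N, ∀ g, ξ g = ρ g m - m := by
  obtain ⟨m, hmN, hm⟩ := exists_mem_coboundary_of_eq_zero_on (ρ := ρ)
    (ξ := fun g => ξ g - (ρ g m₀ - m₀)) hind N
    (fun g => N.sub_mem (hξN g) (N.sub_mem (hN g _ hm₀) hm₀))
    (fun g h => by simp only [hcoc, map_mul, map_sub, Module.End.mul_apply]; abel)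
    (fun t ht => sub_eq_zero.2 (hP t ht))
  refine ⟨m₀ + m, N.add_mem hm₀ hmN, fun g => ?_⟩
  rw [map_add]
  linear_combination (norm := module) hm g

end Representation

section

variable {p : ℕ}

def actAd0Rep (i : ℕ) :
    Representation (ZMod p) (GL (Fin 2) (ZMod p)) (Matrix (Fin 2) (Fin 2) (ZMod p)) where
  toFun g :=
    { toFun := actAd0' p i g
      map_add' A B := by simp only [actAd0', Matrix.mul_add, Matrix.add_mul, smul_add]
      map_smul' c A := by
        simp only [actAd0', Matrix.mul_smul, Matrix.smul_mul, smul_smul, mul_comm,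
          RingHom.id_apply] }
  map_one' := LinearMap.ext fun A => by
    change actAd0' p i 1 A = A
    simp [actAd0']
  map_mul' g h := LinearMap.ext fun A => by
    change actAd0' p i (g * h) A = actAd0' p i g (actAd0' p i h A)
    simp only [actAd0', Units.val_mul, mul_inv_rev, Matrix.det_mul, mul_pow, Matrix.smul_mul,
      Matrix.mul_smul, smul_smul, Matrix.mul_assoc]

lemma trace_actAd0' (i : ℕ) (g : GL (Fin 2) (ZMod p)) (A : Matrix (Fin 2) (Fin 2) (ZMod p)) :
    (actAd0' p i g A).trace = (g : Matrix (Fin 2) (Fin 2) (ZMod p)).det ^ i * A.trace := by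
  rw [actAd0', Matrix.trace_smul, Matrix.trace_mul_cycle, ← Units.val_mul, inv_mul_cancel,
    Units.val_one, Matrix.one_mul, smul_eq_mul]

lemma val_transvGL_pow (n : ℕ) :
    ((transvGL p ^ n : GL (Fin 2) (ZMod p)) : Matrix (Fin 2) (Fin 2) (ZMod p)) =
      !![1, (n : ZMod p); 0, 1] := by
  induction n with
  | zero => simp [Matrix.one_fin_two]
  | succ n ih =>
    rw [pow_succ, Units.val_mul, ih, show (transvGL p : Matrix (Fin 2) (Fin 2) (ZMod p)) =
      !![1, 1; 0, 1] from rfl, Matrix.mul_fin_two]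
    simp [add_comm]

lemma transvGL_pow_eq_one_iff {n : ℕ} : transvGL p ^ n = 1 ↔ p ∣ n := by
  rw [← Units.val_inj, val_transvGL_pow, Units.val_one, Matrix.one_fin_two,
    ← ZMod.natCast_eq_zero_iff]
  simp

lemma orderOf_transvGL : orderOf (transvGL p) = p :=
  Nat.dvd_right_iff_eq.1 fun _ => orderOf_dvd_iff_pow_eq_one.trans transvGL_pow_eq_one_iff

lemma card_zpowers_transvGL_subgroupOf {G : Subgroup (GL (Fin 2) (ZMod p))}
    (hG : transvGL p ∈ G) : Nat.card ((Subgroup.zpowers (transvGL p)).subgroupOf G) = p := by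
  rw [Nat.card_congr (Subgroup.subgroupOfEquivOfLe ((Subgroup.zpowers_le).2 hG)).toEquiv,
    Nat.card_zpowers, orderOf_transvGL]

lemma not_sq_dvd_card_GL (hp : p.Prime) : ¬ p ^ 2 ∣ Nat.card (GL (Fin 2) (ZMod p)) := by
  have := Fact.mk hp
  have hcard : Nat.card (GL (Fin 2) (ZMod p)) = p * ((p ^ 2 - 1) * (p - 1)) := by
    rw [Matrix.card_GL_field, Fin.prod_univ_two, ZMod.card]
    simp only [Fin.val_zero, Fin.val_one, pow_zero, pow_one, sq, ← Nat.mul_sub_one]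
    ring
  rw [hcard, sq, Nat.mul_dvd_mul_iff_left hp.pos, ← ZMod.natCast_eq_zero_iff]
  push_cast [Nat.cast_sub (Nat.mul_pos hp.pos hp.pos), Nat.cast_sub hp.one_le]
  simp

lemma not_dvd_index_of_card_eq {Γ : Type*} [Group Γ] (hΓ : ¬ p ^ 2 ∣ Nat.card Γ)
    {P : Subgroup Γ} (hP : Nat.card P = p) : ¬ p ∣ P.index := fun h =>
  hΓ (by rw [← P.card_mul_index, hP, sq]; exact mul_dvd_mul_left p h)

lemma not_dvd_index_zpowers_transvGL (hp : p.Prime) {G : Subgroup (GL (Fin 2) (ZMod p))}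
    (hG : transvGL p ∈ G) : ¬ p ∣ ((Subgroup.zpowers (transvGL p)).subgroupOf G).index :=
  not_dvd_index_of_card_eq
    (fun h => not_sq_dvd_card_GL hp (h.trans (Subgroup.card_subgroup_dvd_card G)))
    (card_zpowers_transvGL_subgroupOf hG)

lemma exists_sylow_eq_zpowers_transvGL (hp : p.Prime) {G : Subgroup (GL (Fin 2) (ZMod p))}
    (hG : transvGL p ∈ G) :
    ∃ P : Sylow p G, (P : Subgroup G) = (Subgroup.zpowers (transvGL p)).subgroupOf G := by
  have := Fact.mk hp
  have hP : IsPGroup p ((Subgroup.zpowers (transvGL p)).subgroupOf G) :=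
    IsPGroup.of_card (n := 1) (by rw [card_zpowers_transvGL_subgroupOf hG, pow_one])
  exact ⟨hP.toSylow (not_dvd_index_zpowers_transvGL hp hG), hP.toSylow_coe _⟩

end

theorem cocycle_trivial_of_trivial_on_transvection_general
    (p : ℕ) (hp : p.Prime) (i : ℕ)
    (G : Subgroup (GL (Fin 2) (ZMod p)))
    (hSL : (Matrix.SpecialLinearGroup.toGL (n := Fin 2) (R := ZMod p)).range ≤ G)
    (ξ : GL (Fin 2) (ZMod p) → Matrix (Fin 2) (Fin 2) (ZMod p))
    (htr : ∀ g ∈ G, (ξ g).trace = 0)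
    (hcoc : ∀ g ∈ G, ∀ h ∈ G, ξ (g * h) = ξ g + actAd0' p i g (ξ h))
    (hres : ∃ m : Matrix (Fin 2) (Fin 2) (ZMod p), m.trace = 0 ∧
      ∀ g ∈ Subgroup.zpowers (transvGL p), ξ g = actAd0' p i g m - m) :
    (∃ m : Matrix (Fin 2) (Fin 2) (ZMod p), m.trace = 0 ∧
        ∀ g ∈ G, ξ g = actAd0' p i g m - m) ∧
      ∀ G' : Subgroup (GL (Fin 2) (ZMod 5)),
        (Matrix.SpecialLinearGroup.toGL (n := Fin 2) (R := ZMod 5)).range ≤ G' →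
        ∃ P : Sylow 5 G',
          (P : Subgroup G') = (Subgroup.zpowers (transvGL 5)).subgroupOf G' := by
  refine ⟨?_, fun G' hSL' => exists_sylow_eq_zpowers_transvGL Nat.prime_five (hSL' ⟨_, rfl⟩)⟩
  obtain ⟨m₀, hm₀, hres⟩ := hres
  have := Fact.mk hp
  set P := (Subgroup.zpowers (transvGL p)).subgroupOf G
  have hind : (P.index : ZMod p) ≠ 0 :=
    (ZMod.natCast_eq_zero_iff _ _).not.2 (not_dvd_index_zpowers_transvGL hp (hSL ⟨_, rfl⟩))
  obtain ⟨m, hm, hcob⟩ := Representation.exists_mem_coboundary_of_coboundary_on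
    (ρ := (actAd0Rep i).comp G.subtype) (ξ := fun g : G => ξ g) hind
    (LinearMap.ker (Matrix.traceLinearMap (Fin 2) (ZMod p) (ZMod p)))
    (fun g A (hA : A.trace = 0) => show (actAd0' p i g A).trace = 0 by
      rw [trace_actAd0', hA, mul_zero])
    (fun g => htr g g.2) (fun g h => hcoc g g.2 h h.2) hm₀ (fun t ht => hres t ht)
  exact ⟨m, hm, fun g hg => hcob ⟨g, hg⟩⟩

/-- let `p` be an odd prime, `G ≤ GL₂(𝔽_p)` containing `SL₂(𝔽_p)`, and
`ξ` a 1-cocycle on `G` valued in `ad⁰(i)` restricting to a coboundary on the cyclic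
subgroup generated by the transvection; assume `p = 5`, or `p ≥ 7` together with the
vanishing `H¹(SL₂(𝔽_p), ad⁰) = 0`.  Then `ξ` is a coboundary.  In particular, for any
`G' ⊇ SL₂(𝔽₅)` in `GL₂(𝔽₅)`, the subgroup generated by `[[1,1],[0,1]]` is a Sylow
5-subgroup of `G'`. -/
theorem cocycle_trivial_of_trivial_on_transvection
    (p : ℕ) (hp : p.Prime) (hodd : p ≠ 2) (i : ℕ)
    (G : Subgroup (GL (Fin 2) (ZMod p)))
    (hSL : (Matrix.SpecialLinearGroup.toGL (n := Fin 2) (R := ZMod p)).range ≤ G)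
    (ξ : GL (Fin 2) (ZMod p) → Matrix (Fin 2) (Fin 2) (ZMod p))
    (htr : ∀ g ∈ G, (ξ g).trace = 0)
    (hcoc : ∀ g ∈ G, ∀ h ∈ G, ξ (g * h) = ξ g + actAd0' p i g (ξ h))
    (hres : ∃ m : Matrix (Fin 2) (Fin 2) (ZMod p), m.trace = 0 ∧
      ∀ g ∈ Subgroup.zpowers (transvGL p), ξ g = actAd0' p i g m - m)
    (hcase : p = 5 ∨ (7 ≤ p ∧
      ∀ η : Matrix.SpecialLinearGroup (Fin 2) (ZMod p) → Matrix (Fin 2) (Fin 2) (ZMod p),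
        (∀ g, (η g).trace = 0) →
        (∀ g h, η (g * h) = η g + (g : Matrix (Fin 2) (Fin 2) (ZMod p)) * η h *
          ((g⁻¹ : Matrix.SpecialLinearGroup (Fin 2) (ZMod p)) :
            Matrix (Fin 2) (Fin 2) (ZMod p))) →
        ∃ m : Matrix (Fin 2) (Fin 2) (ZMod p), m.trace = 0 ∧
          ∀ g, η g = (g : Matrix (Fin 2) (Fin 2) (ZMod p)) * m *
            ((g⁻¹ : Matrix.SpecialLinearGroup (Fin 2) (ZMod p)) :
              Matrix (Fin 2) (Fin 2) (ZMod p)) - m)) :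
    (∃ m : Matrix (Fin 2) (Fin 2) (ZMod p), m.trace = 0 ∧
        ∀ g ∈ G, ξ g = actAd0' p i g m - m) ∧
      ∀ G' : Subgroup (GL (Fin 2) (ZMod 5)),
        (Matrix.SpecialLinearGroup.toGL (n := Fin 2) (R := ZMod 5)).range ≤ G' →
        ∃ P : Sylow 5 G',
          (P : Subgroup G') = (Subgroup.zpowers (transvGL 5)).subgroupOf G' :=
  cocycle_trivial_of_trivial_on_transvection_general p hp i G hSL ξ htr hcoc hres

end
end

section
/- Let F be a local field with residue field of order q, p an odd prime not dividing q, and let G = Gal(F^tr/F) be the Galois group of the maximal tamely ramified extension, with presentation ⟨σ, τ | στσ^{-1} = τ^q⟩ (as profinite group). Suppose A is a complete local ring with maximal ideal m_A, residue field k of characteristic p, and ρ: G → GL_2(A) is a representation with ρ(σ) = diag(qα̂(1+s), (α̂(1+s))^{-1}) and ρ(τ) = [[a,t₁],[t₂,d]] with s, t₁, t₂, a−1, d−1 ∈ m_A and ad − t₁t₂ = 1. If α² ≠ 1 in k (where α is the residue of α̂), then t₁ = 0; if q²α² ≠ 1 in k, then t₂ = 0. -/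
/-!
Write `u = α̂(1+s)`, so `ρ(σ) = diag(q u, u⁻¹)`. By Cayley–Hamilton, a `2 × 2` matrix `T` of
determinant one satisfies `T^q = h • T - h' • 1` with `h = S_{q-1}(tr T)`, a rescaled Chebyshev
polynomial of the second kind, so the off-diagonal entries of `T^q` are `h t₁` and `h t₂`. The
off-diagonal entries of `ρ(σ) T = T^q ρ(σ)` then read `t₁ (q u² - h) = 0` and `t₂ (1 - h q u²) = 0`.
Since `tr T ≡ 2` modulo the maximal ideal and `S_{q-1}(2) = q`, the second factors reduce to
`q (α² - 1)` and `1 - q² α²`; when these are nonzero the factors are units.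
-/

open IsLocalRing Polynomial Polynomial.Chebyshev

namespace Matrix

variable {R : Type*} [CommRing R]

theorem fin_two_sq_eq_trace_smul_sub_det_smul (M : Matrix (Fin 2) (Fin 2) R) :
    M ^ 2 = M.trace • M - M.det • 1 := by
  ext i j
  fin_cases i <;> fin_cases j <;>
    simp [sq, mul_apply, trace_fin_two, det_fin_two] <;> ring

theorem fin_two_pow_add_one_of_det_eq_one {M : Matrix (Fin 2) (Fin 2) R} (hM : M.det = 1)
    (n : ℕ) :
    M ^ (n + 1) = (S R n).eval M.trace • M - (S R (n - 1)).eval M.trace • 1 := by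
  induction n with
  | zero => simp
  | succ n ih =>
    rw [pow_succ, ih, sub_mul, smul_mul_assoc, smul_mul_assoc, ← sq,
      fin_two_sq_eq_trace_smul_sub_det_smul, hM, one_mul]
    push_cast
    rw [add_sub_cancel_right, S_add_one]
    simp only [eval_sub, eval_mul, eval_X]
    module

theorem fin_two_pow_add_one_apply_zero_one {M : Matrix (Fin 2) (Fin 2) R} (hM : M.det = 1)
    (n : ℕ) : (M ^ (n + 1)) 0 1 = (S R n).eval M.trace * M 0 1 := by
  simp [fin_two_pow_add_one_of_det_eq_one hM]

theorem fin_two_pow_add_one_apply_one_zero {M : Matrix (Fin 2) (Fin 2) R} (hM : M.det = 1)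
    (n : ℕ) : (M ^ (n + 1)) 1 0 = (S R n).eval M.trace * M 1 0 := by
  simp [fin_two_pow_add_one_of_det_eq_one hM]

theorem fin_two_off_diag_of_diagonal_mul_eq_pow_mul {x y a b c d : R}
    (hdet : a * d - b * c = 1) {n : ℕ}
    (hrel : !![x, 0; 0, y] * !![a, b; c, d] = !![a, b; c, d] ^ (n + 1) * !![x, 0; 0, y]) :
    x * b = (S R n).eval (a + d) * b * y ∧ y * c = (S R n).eval (a + d) * c * x := by
  have hM : (!![a, b; c, d] : Matrix (Fin 2) (Fin 2) R).det = 1 := by rwa [det_fin_two_of]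
  have h01 := congrFun₂ hrel 0 1
  have h10 := congrFun₂ hrel 1 0
  simp only [mul_apply, Fin.sum_univ_two, fin_two_pow_add_one_apply_zero_one hM,
    fin_two_pow_add_one_apply_one_zero hM, trace_fin_two_of, of_apply, cons_val', cons_val_zero,
    cons_val_one, empty_val', cons_val_fin_one, zero_mul, add_zero, zero_add, mul_zero]
    at h01 h10
  exact ⟨h01, h10⟩

end Matrix

theorem IsLocalRing.eq_zero_of_mul_eq_zero_of_residue_ne_zero {R : Type*} [CommRing R]
    [IsLocalRing R] {x y : R} (hxy : x * y = 0) (hy : residue R y ≠ 0) : x = 0 :=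
  ((residue_ne_zero_iff_isUnit y).1 hy).mul_left_eq_zero.1 hxy

theorem IsLocalRing.residue_eval_chebyshevS_of_residue_eq_two {R : Type*} [CommRing R]
    [IsLocalRing R] {t : R} (ht : residue R t = 2) (n : ℤ) :
    residue R ((S R n).eval t) = n + 1 := by
  rw [← ResidueField.algebraMap_eq, algebraMap_eval_S, ResidueField.algebraMap_eq, ht, S_eval_two]

theorem tame_relation_forces_triangular_general
    (p q : ℕ) (hpq : ¬ p ∣ q)
    (A : Type*) [CommRing A] [IsLocalRing A]
    [CharP (ResidueField A) p]
    (αhat : Aˣ) (s t₁ t₂ a d w : A)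
    (hs : s ∈ maximalIdeal A)
    (ha : a - 1 ∈ maximalIdeal A) (hd : d - 1 ∈ maximalIdeal A)
    (hdet : a * d - t₁ * t₂ = 1)
    (hw : w * ((αhat : A) * (1 + s)) = 1)
    (S T : Matrix (Fin 2) (Fin 2) A)
    (hS : S = !![(q : A) * ((αhat : A) * (1 + s)), 0; 0, w])
    (hT : T = !![a, t₁; t₂, d])
    (hrel : S * T = T ^ q * S) :
    ((residue A (αhat : A)) ^ 2 ≠ 1 → t₁ = 0) ∧
      (((q : ResidueField A) * residue A (αhat : A)) ^ 2 ≠ 1 → t₂ = 0) := by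
  subst hS hT
  set u : A := (αhat : A) * (1 + s)
  have hq0 : q ≠ 0 := by rintro rfl; exact hpq (dvd_zero p)
  obtain ⟨n, rfl⟩ := Nat.exists_eq_add_one_of_ne_zero hq0
  have hq_residue : ((n + 1 : ℕ) : ResidueField A) ≠ 0 := by
    rwa [Ne, CharP.cast_eq_zero_iff (ResidueField A) p]
  obtain ⟨h01, h10⟩ := Matrix.fin_two_off_diag_of_diagonal_mul_eq_pow_mul hdet hrel
  set h := (Chebyshev.S A n).eval (a + d)
  have residue_h : residue A h = ((n + 1 : ℕ) : ResidueField A) := by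
    have htr : residue A (a + d - 2) = 0 :=
      (residue_eq_zero_iff _).2 (by convert add_mem ha hd using 1; ring)
    rw [map_sub, sub_eq_zero, map_ofNat] at htr
    rw [residue_eval_chebyshevS_of_residue_eq_two htr]
    push_cast; ring
  have residue_u : residue A u = residue A (αhat : A) := by
    simp [u, (residue_eq_zero_iff s).2 hs]
  have ht₁_mul : t₁ * ((n + 1 : ℕ) * u ^ 2 - h) = 0 := by
    linear_combination u * h01 + h * t₁ * hw
  have ht₂_mul : t₂ * (1 - h * (n + 1 : ℕ) * u ^ 2) = 0 := by
    linear_combination u * h10 - t₂ * hw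
  refine ⟨fun hα => eq_zero_of_mul_eq_zero_of_residue_ne_zero ht₁_mul ?_,
    fun hα => eq_zero_of_mul_eq_zero_of_residue_ne_zero ht₂_mul ?_⟩
  · rw [map_sub, map_mul, map_pow, map_natCast, residue_u, residue_h, ← mul_sub_one]
    exact mul_ne_zero hq_residue (sub_ne_zero.2 hα)
  · rw [map_sub, map_mul, map_mul, map_pow, map_natCast, residue_u, residue_h, map_one]
    exact sub_ne_zero.2 fun h1 => hα (by linear_combination -h1)

/-- tame local deformation relation.  With
`ρ(σ) = diag(q·α̂(1+s), (α̂(1+s))⁻¹)`, `ρ(τ) = [[a,t₁],[t₂,d]]` satisfying the tame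
relation `στσ⁻¹ = τ^q` (expressed as `S·T = T^q·S`), `s, t₁, t₂, a−1, d−1 ∈ m_A` and
`ad − t₁t₂ = 1`: if `α² ≠ 1` in the residue field then `t₁ = 0`, and if `q²α² ≠ 1`
in the residue field then `t₂ = 0`. -/
theorem tame_relation_forces_triangular
    (p q : ℕ) (hp : p.Prime) (hodd : p ≠ 2) (hpq : ¬ p ∣ q) (hq : IsPrimePow q)
    (A : Type*) [CommRing A] [IsLocalRing A]
    [IsAdicComplete (maximalIdeal A) A]
    [CharP (ResidueField A) p]
    (αhat : Aˣ) (s t₁ t₂ a d w : A)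
    (hs : s ∈ maximalIdeal A) (ht₁ : t₁ ∈ maximalIdeal A) (ht₂ : t₂ ∈ maximalIdeal A)
    (ha : a - 1 ∈ maximalIdeal A) (hd : d - 1 ∈ maximalIdeal A)
    (hdet : a * d - t₁ * t₂ = 1)
    (hw : w * ((αhat : A) * (1 + s)) = 1)
    (S T : Matrix (Fin 2) (Fin 2) A)
    (hS : S = !![(q : A) * ((αhat : A) * (1 + s)), 0; 0, w])
    (hT : T = !![a, t₁; t₂, d])
    (hrel : S * T = T ^ q * S) :
    ((residue A (αhat : A)) ^ 2 ≠ 1 → t₁ = 0) ∧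
      (((q : ResidueField A) * residue A (αhat : A)) ^ 2 ≠ 1 → t₂ = 0) :=
  tame_relation_forces_triangular_general p q hpq A αhat s t₁ t₂ a d w hs ha hd hdet hw S T hS hT
    hrel
end

section
/- Let f be a p-ordinary newform with absolutely irreducible residual representation ρ̄_f mod ℘, and suppose ρ_{f,℘}|_{G_p} is upper triangular: [[ψ₁χ^{k−1}, c],[0, ψ₂]]. If M ∈ GL_2(K) is such that M ρ_{f,℘} M^{-1} is integral, reduces to ρ̄_f, and is also upper triangular at p with the same diagonal characters, then M is a scalar multiple of [[u, v],[0, 1]] with u ≡ 1 mod ℘ and v ≡ 0 mod ℘; consequently the associated extension class mod ℘^n is multiplied by the unit u, and in particular whether ρ_{f,℘} mod ℘^n is split at p is independent of the choice of lattice. -/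
/-!
Write `τ M = M ρ`. At an element of `G_p` whose diagonal characters differ mod `℘`, the
lower-left entry of this identity forces `M₁₀ = 0`, so `M = d • N` with `N = !![a, b; 0, 1]`.
Absolute irreducibility provides `g` with `ρ(g)₁₀` a unit, hence also `τ(g)₁₀`; the lower-left and
upper-left entries of `τ(g) N = N ρ(g)` then solve for `a` and `b` inside `𝒪`, and `τ ≡ ρ mod ℘`
gives `a ≡ 1`, `b ≡ 0`. Hence `!![a, b; 0, 1]` intertwines `τ` and `ρ` over `𝒪`, so on `G_p` the
upper-right entry of `τ` is `a ρ₀₁ + b (ρ₁₁ - ρ₀₀)`, and a splitting parameter `z` for `ρ`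
mod `℘ⁿ` becomes `a z - b` for `τ`.
-/

open IsLocalRing

noncomputable section

/-- The residual representation attached to `ρ : G →* GL₂(𝒪)`. -/
def residualRep {G : Type*} [Group G] {O : Type*} [CommRing O] [IsLocalRing O]
    (ρ : G →* GL (Fin 2) O) (g : G) : Matrix (Fin 2) (Fin 2) (ResidueField O) :=
  ((ρ g : Matrix (Fin 2) (Fin 2) O)).map (residue O)

/-- Absolute irreducibility of the residual representation, in the (equivalent)
Burnside form: the matrices `ρ̄(g)` span all of `M₂(𝕜)`. -/
def ResAbsIrred {G : Type*} [Group G] {O : Type*} [CommRing O] [IsLocalRing O]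
    (ρ : G →* GL (Fin 2) O) : Prop :=
  Submodule.span (ResidueField O) (Set.range (residualRep ρ)) = ⊤

theorem Matrix.exists_apply_ne_zero_of_span_range_eq_top {k ι m n : Type*} [Semiring k]
    [Nontrivial k] [DecidableEq m] [DecidableEq n] {f : ι → Matrix m n k}
    (hf : Submodule.span k (Set.range f) = ⊤) (i : m) (j : n) :
    ∃ x, f x i j ≠ 0 := by
  by_contra! hzero
  have hle : Submodule.span k (Set.range f) ≤ LinearMap.ker (Matrix.entryLinearMap k k i j) :=
    Submodule.span_le.mpr (Set.range_subset_iff.mpr hzero)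
  rw [hf] at hle
  simpa using hle (Submodule.mem_top (x := Matrix.single i j 1))

theorem Matrix.fin_two_apply_one_zero_eq_zero_of_mul_eq_mul {R : Type*} [CommRing R]
    [NoZeroDivisors R] {X M Y : Matrix (Fin 2) (Fin 2) R} (h : X * M = M * Y)
    (hX : X 1 0 = 0) (hY : Y 1 0 = 0) (h11 : X 1 1 = Y 1 1) (hY00 : Y 0 0 ≠ Y 1 1) :
    M 1 0 = 0 := by
  have h10 := congrFun (congrFun h 1) 0
  simp only [Matrix.mul_apply, Fin.sum_univ_two, hX, hY, h11] at h10
  have : M 1 0 * (Y 0 0 - Y 1 1) = 0 := by linear_combination -h10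
  exact (mul_eq_zero.mp this).resolve_right (sub_ne_zero.mpr hY00)

theorem Matrix.mul_affine_eq_affine_mul_iff {R : Type*} [CommRing R]
    {X Y : Matrix (Fin 2) (Fin 2) R} {a b : R} :
    X * !![a, b; 0, 1] = !![a, b; 0, 1] * Y ↔
      X 0 0 * a = a * Y 0 0 + b * Y 1 0 ∧ X 0 0 * b + X 0 1 = a * Y 0 1 + b * Y 1 1 ∧
        X 1 0 * a = Y 1 0 ∧ X 1 0 * b + X 1 1 = Y 1 1 := by
  simp [← Matrix.ext_iff, Fin.forall_fin_two, Matrix.mul_apply, Matrix.vecMul, dotProduct,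
    Fin.sum_univ_two, and_assoc]

theorem Matrix.GeneralLinearGroup.exists_eq_smul_affine {K : Type*} [Field K]
    (M : GL (Fin 2) K) (hM : (M : Matrix (Fin 2) (Fin 2) K) 1 0 = 0) :
    ∃ d : K, d ≠ 0 ∧ ∃ a b : K, (M : Matrix (Fin 2) (Fin 2) K) = d • !![a, b; 0, 1] := by
  have hdet := (Matrix.isUnit_iff_isUnit_det _).mp M.isUnit
  rw [Matrix.det_fin_two, hM, mul_zero, sub_zero] at hdet
  have hd : (M : Matrix (Fin 2) (Fin 2) K) 1 1 ≠ 0 := right_ne_zero_of_mul hdet.ne_zero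
  refine ⟨_, hd, M.1 0 0 / M.1 1 1, M.1 0 1 / M.1 1 1, ?_⟩
  ext i j
  fin_cases i <;> fin_cases j <;> simp [hM, mul_div_cancel₀ _ hd]

theorem exists_eq_algebraMap_of_mul_eq {O K : Type*} [CommRing O] [CommRing K] [Algebra O K]
    {t s : O} (ht : IsUnit t) {x : K} (h : algebraMap O K t * x = algebraMap O K s) :
    ∃ y, t * y = s ∧ x = algebraMap O K y := by
  refine ⟨ht.unit⁻¹ * s, ht.unit.mul_inv_cancel_left s, ?_⟩
  rw [map_mul, ← h, ← mul_assoc, ← map_mul, IsUnit.val_inv_mul, map_one, one_mul]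

theorem IsLocalRing.sub_one_mem_maximalIdeal_of_mul_eq {O : Type*} [CommRing O] [IsLocalRing O]
    {t u s : O} (h : t * u = s) (hts : residue O t = residue O s) (ht : residue O t ≠ 0) :
    u - 1 ∈ maximalIdeal O := by
  rw [← residue_eq_zero_iff, map_sub, map_one, sub_eq_zero]
  exact mul_left_cancel₀ ht (by rw [← map_mul, h, hts, mul_one])

theorem IsLocalRing.isUnit_of_sub_one_mem_maximalIdeal {R : Type*} [CommRing R] [IsLocalRing R]
    {u : R} (hu : u - 1 ∈ maximalIdeal R) : IsUnit u := by
  simpa using isUnit_one_sub_self_of_mem_nonunits (1 - u) (by rw [← neg_sub]; exact neg_mem hu)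

theorem exists_algebraMap_eq_of_mul_affine_eq_affine_mul {O K : Type*} [CommRing O]
    [IsLocalRing O] [CommRing K] [Algebra O K] {T R : Matrix (Fin 2) (Fin 2) O} {a b : K}
    (h : T.map (algebraMap O K) * !![a, b; 0, 1] = !![a, b; 0, 1] * R.map (algebraMap O K))
    (hTR : T.map (residue O) = R.map (residue O)) (hR : residue O (R 1 0) ≠ 0) :
    ∃ u v : O, u - 1 ∈ maximalIdeal O ∧ v ∈ maximalIdeal O ∧
      a = algebraMap O K u ∧ b = algebraMap O K v := by
  have hres : ∀ i j, residue O (T i j) = residue O (R i j) :=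
    fun i j => congrFun (congrFun hTR i) j
  have ht : IsUnit (T 1 0) := (residue_ne_zero_iff_isUnit _).mp (hres 1 0 ▸ hR)
  have hr : IsUnit (R 1 0) := (residue_ne_zero_iff_isUnit _).mp hR
  obtain ⟨h₀₀, -, h₁₀, -⟩ := Matrix.mul_affine_eq_affine_mul_iff.mp h
  simp only [Matrix.map_apply] at h₀₀ h₁₀
  obtain ⟨u, htu, rfl⟩ := exists_eq_algebraMap_of_mul_eq ht h₁₀
  obtain ⟨v, hrv, rfl⟩ := exists_eq_algebraMap_of_mul_eq hr (x := b) (s := u * (T 0 0 - R 0 0))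
    (by rw [map_mul, map_sub]; linear_combination -h₀₀)
  refine ⟨u, v, sub_one_mem_maximalIdeal_of_mul_eq htu (hres 1 0) (hres 1 0 ▸ hR), ?_, rfl, rfl⟩
  rw [← Ideal.unit_mul_mem_iff_mem _ hr, hrv]
  refine Ideal.mul_mem_left _ _ ((residue_eq_zero_iff _).mp ?_)
  rw [map_sub, hres, sub_self]

section Splitting

variable {ι R : Type*} [CommRing R]

/-- With `c` the upper-right entry and `d = ρ₁₁ - ρ₀₀`, conjugation by `!![1, z; 0, 1]` replaces
`c` by `c + z * d`. -/
def UpperRightSplitsMod (I : Ideal R) (s : Set ι) (c d : ι → R) : Prop :=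
  ∃ z : R, ∀ i ∈ s, c i + z * d i ∈ I

theorem UpperRightSplitsMod.iff_of_eq_mul_add {I : Ideal R} {s : Set ι} {c c' d d' : ι → R}
    {u v : R} (hu : IsUnit u) (hc : ∀ i ∈ s, c' i = u * c i + v * d i)
    (hd : ∀ i ∈ s, d' i = d i) :
    UpperRightSplitsMod I s c' d' ↔ UpperRightSplitsMod I s c d := by
  have key : ∀ z, ∀ i ∈ s, c' i + z * d' i = u * (c i + hu.unit⁻¹ * (v + z) * d i) := by
    intro z i hi
    rw [hc i hi, hd i hi]
    linear_combination (-(v + z) * d i) * hu.mul_val_inv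
  constructor
  · rintro ⟨z, hz⟩
    refine ⟨hu.unit⁻¹ * (v + z), fun i hi => ?_⟩
    rw [← I.unit_mul_mem_iff_mem hu, ← key z i hi]
    exact hz i hi
  · rintro ⟨z, hz⟩
    refine ⟨u * z - v, fun i hi => ?_⟩
    rw [key _ i hi, add_sub_cancel, ← mul_assoc, hu.val_inv_mul, one_mul]
    exact I.mul_mem_left u (hz i hi)

end Splitting

/-- Setting: `𝒪` is the (local) coefficient ring of the `p`-ordinary
newform `f`, with fraction field `K`, maximal ideal `℘` and residue field `𝕜`;
`ρ : G_F →* GL₂(𝒪)` is `ρ_{f,℘}`, residually absolutely irreducible, and upper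
triangular `[[ψ₁χ^(k-1), c],[0,ψ₂]]` on the decomposition group `Gp` with residually
distinct diagonal characters (`p`-ordinarity/(LC1)).  If `M ∈ GL₂(K)` conjugates `ρ`
to an integral representation `τ` which reduces to `ρ̄` and is upper triangular on
`Gp` with the same diagonal characters, then `M` is a scalar multiple of
`[[u,v],[0,1]]` with `u ≡ 1`, `v ≡ 0 mod ℘`; consequently the extension class of `τ`
at `Gp` is `u` times that of `ρ` (up to a coboundary), and in particular `τ` is split
mod `℘ⁿ` if and only if `ρ` is. -/
theorem lattice_independence_of_splitting
    {G : Type*} [Group G] (Gp : Subgroup G)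
    (O : Type*) [CommRing O] [IsLocalRing O] [IsDomain O]
    (ρ : G →* GL (Fin 2) O)
    (hirr : ResAbsIrred ρ)
    (hρtri : ∀ g ∈ Gp, (ρ g : Matrix (Fin 2) (Fin 2) O) 1 0 = 0)
    (hdist : ∃ g ∈ Gp, residue O ((ρ g : Matrix (Fin 2) (Fin 2) O) 0 0) ≠
      residue O ((ρ g : Matrix (Fin 2) (Fin 2) O) 1 1))
    (M : GL (Fin 2) (FractionRing O))
    (τ : G → Matrix (Fin 2) (Fin 2) O)
    (hint : ∀ g, (τ g).map (algebraMap O (FractionRing O)) =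
      (M : Matrix (Fin 2) (Fin 2) (FractionRing O)) *
        (ρ g : Matrix (Fin 2) (Fin 2) O).map (algebraMap O (FractionRing O)) *
        ((M⁻¹ : GL (Fin 2) (FractionRing O)) : Matrix (Fin 2) (Fin 2) (FractionRing O)))
    (hred : ∀ g, (τ g).map (residue O) = residualRep ρ g)
    (hτtri : ∀ g ∈ Gp, τ g 1 0 = 0 ∧
      τ g 0 0 = (ρ g : Matrix (Fin 2) (Fin 2) O) 0 0 ∧
      τ g 1 1 = (ρ g : Matrix (Fin 2) (Fin 2) O) 1 1) :
    ∃ (lam : FractionRing O) (u v : O), lam ≠ 0 ∧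
      u - 1 ∈ maximalIdeal O ∧ v ∈ maximalIdeal O ∧
      (∀ i j, (M : Matrix (Fin 2) (Fin 2) (FractionRing O)) i j =
        lam * algebraMap O (FractionRing O) ((!![u, v; 0, 1] : Matrix (Fin 2) (Fin 2) O) i j)) ∧
      (∀ g ∈ Gp, τ g 0 1 = u * (ρ g : Matrix (Fin 2) (Fin 2) O) 0 1 +
        v * ((ρ g : Matrix (Fin 2) (Fin 2) O) 1 1 - (ρ g : Matrix (Fin 2) (Fin 2) O) 0 0)) ∧
      ∀ n : ℕ,
        ((∃ z : O, ∀ g ∈ Gp, τ g 0 1 + z * (τ g 1 1 - τ g 0 0) ∈ maximalIdeal O ^ n) ↔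
          (∃ z : O, ∀ g ∈ Gp, (ρ g : Matrix (Fin 2) (Fin 2) O) 0 1 +
            z * ((ρ g : Matrix (Fin 2) (Fin 2) O) 1 1 -
              (ρ g : Matrix (Fin 2) (Fin 2) O) 0 0) ∈ maximalIdeal O ^ n)) := by
  set alg := algebraMap O (FractionRing O)
  have hcomm : ∀ g, (τ g).map alg * M = M * (ρ g : Matrix (Fin 2) (Fin 2) O).map alg :=
    fun g => (Units.eq_mul_inv_iff_mul_eq M).mp (hint g)
  have halg : Function.Injective alg := IsFractionRing.injective O (FractionRing O)
  obtain ⟨g₀, hg₀, hdist₀⟩ := hdist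
  have hM₁₀ : (M : Matrix (Fin 2) (Fin 2) (FractionRing O)) 1 0 = 0 :=
    Matrix.fin_two_apply_one_zero_eq_zero_of_mul_eq_mul (hcomm g₀)
      (by simp [alg, (hτtri g₀ hg₀).1]) (by simp [alg, hρtri g₀ hg₀])
      (by simp [alg, (hτtri g₀ hg₀).2.2]) (fun h => hdist₀ (congrArg _ (halg h)))
  obtain ⟨d, hd, a, b, hM⟩ := M.exists_eq_smul_affine hM₁₀
  have hN : ∀ g, (τ g).map alg * !![a, b; 0, 1] =
      !![a, b; 0, 1] * (ρ g : Matrix (Fin 2) (Fin 2) O).map alg := fun g =>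
    smul_right_injective _ hd <| by
      beta_reduce; rw [← Matrix.mul_smul, ← Matrix.smul_mul, ← hM]; exact hcomm g
  obtain ⟨g₁, hg₁⟩ := Matrix.exists_apply_ne_zero_of_span_range_eq_top hirr 1 0
  obtain ⟨u, v, hu, hv, rfl, rfl⟩ :=
    exists_algebraMap_eq_of_mul_affine_eq_affine_mul (hN g₁) (hred g₁) hg₁
  have hUmap : (!![u, v; 0, 1] : Matrix (Fin 2) (Fin 2) O).map alg = !![alg u, alg v; 0, 1] := by
    ext i j; fin_cases i <;> fin_cases j <;> simp
  have hU : ∀ g, τ g * !![u, v; 0, 1] = !![u, v; 0, 1] * (ρ g : Matrix (Fin 2) (Fin 2) O) :=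
    fun g => Matrix.map_injective halg <| by
      beta_reduce; rw [Matrix.map_mul, Matrix.map_mul, hUmap]; exact hN g
  have hτ₀₁ : ∀ g ∈ Gp, τ g 0 1 = u * (ρ g : Matrix (Fin 2) (Fin 2) O) 0 1 +
      v * ((ρ g : Matrix (Fin 2) (Fin 2) O) 1 1 - (ρ g : Matrix (Fin 2) (Fin 2) O) 0 0) := by
    intro g hg
    obtain ⟨-, h₀₁, -⟩ := Matrix.mul_affine_eq_affine_mul_iff.mp (hU g)
    rw [(hτtri g hg).2.1] at h₀₁
    linear_combination h₀₁
  refine ⟨d, u, v, hd, hu, hv, fun i j => by rw [hM, ← hUmap]; rfl, hτ₀₁, fun n => ?_⟩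
  exact UpperRightSplitsMod.iff_of_eq_mul_add (isUnit_of_sub_one_mem_maximalIdeal hu) hτ₀₁
    (fun g hg => by rw [(hτtri g hg).2.1, (hτtri g hg).2.2])

end
end
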